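/- arXiv:1011.4205 — 5 statements merged into one kernel-verified Lean document; each statement's English description precedes it below -/
import Mathlib

section
/- Let H^{2m+1}_{2k+1} ∈ ℂ for m, k ≥ 0, and extend the notation by H^a_b := 0 whenever b ≤ 0 or b is even. Define structure constants for indices ≥ 0 by: C^{2l}_{2n,2m} = δ^l_{n+m}; C^{2l+1}_{2n,2m} = 0; C^{2l+1}_{2n,2m+1} = C^{2l+1}_{2m+1,2n} = δ^l_{m+n} + H^{2m+1}_{2(n−l)−1}; C^{2l}_{2n,2m+1} = C^{2l}_{2m+1,2n} = 0; C^{2l}_{2n+1,2m+1} = δ^l_{m+n+1} + H^{2n+1}_{2(m−l)+1} + H^{2m+1}_{2(n−l)+1}; C^{2l+1}_{2n+1,2m+1} = 0. Then the quadratic relations H^{2m+1}_{2(k+n)+1} − H^{2(m+n)+1}_{2k+1} − ∑_{s=0}^{n−1} H^{2m+1}_{2s+1} H^{2(n−s)−1}_{2k+1} = 0 (m, k ≥ 0, n ≥ 1) and H^{2m+1}_{2(k+n)+1} + H^{2n+1}_{2(k+m)+1} + ∑_{l=0}^{k−1} H^{2m+1}_{2l+1} H^{2n+1}_{2(k−l)−1}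 = 0 (m, n ≥ 0, k ≥ 1) hold if and only if the associativity conditions ∑_{s≥0} (C^s_{ij} C^r_{ks} − C^s_{ik} C^r_{js}) = 0 hold for all i, j, k, r ≥ 0 (all these sums having only finitely many nonzero terms). -/
/-!
Write `x^n = e_{2n}`, `y_m = e_{2m+1}` and `h m k = H^{2m+1}_{2k+1}` (zero for `k < 0`).
The structure constants are symmetric in the lower indices and `C^s_{ij}` vanishes unless
`s ≡ i + j (mod 2)` and `s ≤ i + j`, so the coefficient of `e_r` in `e_k (e_i e_j)` is a finite
sum which, for each parity pattern of `(i, j, k)`, evaluates to a Kronecker delta plus values and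
convolutions of `h`. The first quadratic relation collapses the convolution coming from
`x^c (x^a y_b)`; together with the second it collapses those in products with two or three odd
factors. The resulting closed forms are symmetric in `j` and `k`, which is associativity.
Conversely, the associativity conditions for `(x^n, x^{k+1}, y_m)` at `e_1` and for
`(y_n, x^k, y_m)` at `e_0` are exactly the two quadratic relations.
-/

open Finset

theorem finsum_eq_sum_range_two_mul_add {M : Type*} [AddCommMonoid M] {f : ℕ → M} {p : ℕ}
    (N : ℕ) (hpar : ∀ s, s % 2 ≠ p → f s = 0) (hlarge : ∀ s, 2 * N + p < s → f s = 0) :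
    ∑ᶠ s, f s = ∑ t ∈ range (N + 1), f (2 * t + p) := by
  rw [← sum_image fun x _ y _ hxy => by omega]
  refine finsum_eq_sum_of_support_subset f fun s hs => ?_
  have hp : s % 2 = p := by_contra fun h => hs (hpar s h)
  have hN : s ≤ 2 * N + p := by_contra fun h => hs (hlarge s (by omega))
  simp only [coe_image, coe_range, Set.mem_image, Set.mem_Iio]
  exact ⟨s / 2, by omega, by omega⟩

theorem sum_range_eq_of_forall_ge_eq_zero {M : Type*} [AddCommMonoid M] {n N : ℕ} {F : ℕ → M}
    (hnN : n ≤ N) (hF : ∀ t, n ≤ t → F t = 0) : ∑ t ∈ range N, F t = ∑ t ∈ range n, F t :=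
  (sum_subset (range_subset_range.2 hnN) fun t _ ht => hF t (by simpa using ht)).symm

section Semiring

variable {R : Type*} [Semiring R]

theorem sum_range_succ_ite_add_mul {N : ℕ} {g : ℕ → R} (F : ℕ → R) (hg : g N = 0) :
    ∑ t ∈ range (N + 1), ((if t = N then 1 else 0) + g t) * F t
      = F N + ∑ t ∈ range N, g t * F t := by
  rw [sum_range_succ, hg, if_pos rfl, add_zero, one_mul, add_comm]
  refine congrArg (F N + ·) (sum_congr rfl fun t ht => ?_)
  rw [if_neg (mem_range.1 ht).ne, zero_add]

theorem sum_range_mul_ite_eq_add {N c l : ℕ} {g : ℕ → R} (hg : ∀ t, N ≤ t → g t = 0) :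
    ∑ t ∈ range N, g t * (if l = t + c then 1 else 0) = if c ≤ l then g (l - c) else 0 := by
  simp_rw [mul_boole]
  split_ifs with hcl
  · by_cases hN : l - c < N
    · rw [sum_eq_single_of_mem (l - c) (mem_range.2 hN) fun t _ ht => if_neg (by omega),
        if_pos (by omega)]
    · rw [hg _ (by omega)]
      exact sum_eq_zero fun t ht => if_neg (by rw [mem_range] at ht; omega)
  · exact sum_eq_zero fun t _ => if_neg (by omega)

theorem sum_range_reflect_mul (f : ℤ → R) (g : ℕ → R) (n : ℕ) :
    ∑ t ∈ range n, f ((n : ℤ) - t - 1) * g t = ∑ s ∈ range n, f s * g (n - s - 1) := by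
  rw [← sum_range_reflect]
  refine sum_congr rfl fun t ht => ?_
  have ht : t < n := mem_range.1 ht
  rw [show (n : ℤ) - ((n - 1 - t : ℕ) : ℤ) - 1 = t by omega, Nat.sub_right_comm]

end Semiring

variable {R : Type*} [CommRing R] {h : ℕ → ℤ → R}

def QuadraticRelation₁ (h : ℕ → ℤ → R) : Prop :=
  ∀ m k n : ℕ, h m ((k : ℤ) + n) = h (m + n) k + ∑ s ∈ range n, h m s * h (n - s - 1) k

def QuadraticRelation₂ (h : ℕ → ℤ → R) : Prop :=
  ∀ m n k : ℕ, 1 ≤ k →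
    h m ((k : ℤ) + n) + h n ((k : ℤ) + m) + ∑ l ∈ range k, h m l * h n ((k : ℤ) - l - 1) = 0

theorem QuadraticRelation₁.add_sum_eq (hR : QuadraticRelation₁ h)
    (h0 : ∀ m (k : ℤ), k < 0 → h m k = 0) (x y : ℕ) (X : ℤ) :
    h (x + y) X + ∑ t ∈ range y, h x ((y : ℤ) - t - 1) * h t X
      = if 0 ≤ X then h x (y + X) else 0 := by
  split_ifs with hX
  · lift X to ℕ using hX
    rw [add_comm (y : ℤ), hR x X y, sum_range_reflect_mul (h x) (h · X)]
  · simp [h0 _ X (not_le.1 hX)]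

theorem QuadraticRelation₂.sum_range_succ_eq (hR : QuadraticRelation₂ h)
    (h0 : ∀ m (k : ℤ), k < 0 → h m k = 0) (x y z l : ℕ) :
    ∑ u ∈ range (y + 1), h x ((y : ℤ) - u) * h z ((u : ℤ) - l - 1)
      = if y ≤ l then 0 else -(h z ((x : ℤ) + y - l) + h x ((z : ℤ) + y - l)) := by
  split_ifs with hyl
  · exact sum_eq_zero fun u hu => by rw [h0 z _ (by rw [mem_range] at hu; omega), mul_zero]
  · obtain ⟨k, rfl⟩ : ∃ k, y = l + k := ⟨y - l, by omega⟩
    have hk : 1 ≤ k := by omega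
    rw [show l + k + 1 = l + 1 + k by omega, sum_range_add, sum_eq_zero fun u hu => by
      rw [h0 z _ (by rw [mem_range] at hu; omega), mul_zero], zero_add]
    have hsum : ∑ i ∈ range k, h x (((l + k : ℕ) : ℤ) - ((l + 1 + i : ℕ) : ℤ))
        * h z (((l + 1 + i : ℕ) : ℤ) - l - 1) = ∑ i ∈ range k, h z i * h x ((k : ℤ) - i - 1) :=
      sum_congr rfl fun i _ => by rw [mul_comm]; congr 2 <;> push_cast <;> ring
    rw [hsum, show (x : ℤ) + ((l + k : ℕ) : ℤ) - l = k + x by push_cast; ring,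
      show (z : ℤ) + ((l + k : ℕ) : ℤ) - l = k + z by push_cast; ring]
    linear_combination hR z x k hk

theorem QuadraticRelation₂.sum_range_eq (hR : QuadraticRelation₂ h)
    (h0 : ∀ m (k : ℤ), k < 0 → h m k = 0) (x y z l : ℕ) :
    ∑ t ∈ range y, h x ((y : ℤ) - t - 1) * h z ((t : ℤ) - l)
      = if y ≤ l then 0 else -(h z ((x : ℤ) + y - l) + h x ((z : ℤ) + y - l)) := by
  rw [← hR.sum_range_succ_eq h0, sum_range_succ', h0 z _ (by omega), mul_zero, add_zero]
  exact sum_congr rfl fun t _ => by congr 2 <;> push_cast <;> ring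

/-- `C r i j` stands for `C^r_{ij}` and `h m k` for `H^{2m+1}_{2k+1}`; the fields are the defining
formulas of the structure constants, with `C^r_{2m+1,2n}` replaced by commutativity. -/
structure IsStructConst (h : ℕ → ℤ → R) (C : ℕ → ℕ → ℕ → R) : Prop where
  even_even_even : ∀ l n m : ℕ, C (2 * l) (2 * n) (2 * m) = if l = n + m then 1 else 0
  odd_even_even : ∀ l n m : ℕ, C (2 * l + 1) (2 * n) (2 * m) = 0
  odd_even_odd : ∀ l n m : ℕ,
    C (2 * l + 1) (2 * n) (2 * m + 1) = (if l = m + n then 1 else 0) + h m ((n : ℤ) - l - 1)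
  even_even_odd : ∀ l n m : ℕ, C (2 * l) (2 * n) (2 * m + 1) = 0
  even_odd_odd : ∀ l n m : ℕ, C (2 * l) (2 * n + 1) (2 * m + 1)
    = (if l = m + n + 1 then 1 else 0) + h n ((m : ℤ) - l) + h m ((n : ℤ) - l)
  odd_odd_odd : ∀ l n m : ℕ, C (2 * l + 1) (2 * n + 1) (2 * m + 1) = 0
  comm : ∀ r i j : ℕ, C r i j = C r j i

/-- The coefficient of `e_r` in `e_k (e_i e_j)`. -/
noncomputable def tripleCoeff (C : ℕ → ℕ → ℕ → R) (i j k r : ℕ) : R :=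
  ∑ᶠ s, C s i j * C r k s

namespace IsStructConst

variable {C : ℕ → ℕ → ℕ → R}

theorem eq_zero_of_parity (hC : IsStructConst h C) {s i j : ℕ} (hs : s % 2 ≠ (i + j) % 2) :
    C s i j = 0 := by
  rcases Nat.even_or_odd' s with ⟨l, rfl | rfl⟩ <;>
    rcases Nat.even_or_odd' i with ⟨n, rfl | rfl⟩ <;>
    rcases Nat.even_or_odd' j with ⟨m, rfl | rfl⟩ <;>
    first
      | omega
      | exact hC.odd_even_even .. | exact hC.even_even_odd .. | exact hC.odd_odd_odd ..
      | exact (hC.comm ..).trans (hC.even_even_odd ..)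

theorem eq_zero_of_lt (hC : IsStructConst h C) (h0 : ∀ m (k : ℤ), k < 0 → h m k = 0)
    {s i j : ℕ} (hs : i + j < s) : C s i j = 0 := by
  rcases Nat.even_or_odd' s with ⟨l, rfl | rfl⟩ <;>
    rcases Nat.even_or_odd' i with ⟨n, rfl | rfl⟩ <;>
    rcases Nat.even_or_odd' j with ⟨m, rfl | rfl⟩ <;>
    simp (disch := omega) only [hC.even_even_even, hC.odd_even_even, hC.odd_even_odd,
      hC.even_even_odd, hC.even_odd_odd, hC.odd_odd_odd, hC.comm (2 * l + 1) (2 * n + 1) (2 * m),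
      hC.comm (2 * l) (2 * n + 1) (2 * m), h0, if_neg, add_zero]

theorem finsum_sub_eq (hC : IsStructConst h C) (h0 : ∀ m (k : ℤ), k < 0 → h m k = 0)
    (i j k r : ℕ) : ∑ᶠ s, (C s i j * C r k s - C s i k * C r j s)
      = tripleCoeff C i j k r - tripleCoeff C i k j r := by
  have hfin : ∀ j k, Function.HasFiniteSupport fun s => C s i j * C r k s := fun j k =>
    (Set.finite_Iic (i + j)).subset fun s hs =>
      Set.mem_Iic.2 (not_lt.1 fun hlt => hs (by simp only [hC.eq_zero_of_lt h0 hlt, zero_mul]))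
  exact finsum_sub_distrib (hfin j k) (hfin k j)

theorem tripleCoeff_comm (hC : IsStructConst h C) (i j k r : ℕ) :
    tripleCoeff C i j k r = tripleCoeff C j i k r :=
  finsum_congr fun s => by rw [hC.comm s i j]

theorem tripleCoeff_eq_zero (hC : IsStructConst h C) {i j k r : ℕ}
    (hodd : (i + j + k + r) % 2 = 1) : tripleCoeff C i j k r = 0 :=
  finsum_eq_zero_of_forall_eq_zero fun s => by
    by_cases hs : s % 2 = (i + j) % 2
    · rw [hC.eq_zero_of_parity (s := r) (by omega), mul_zero]
    · rw [hC.eq_zero_of_parity hs, zero_mul]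

theorem tripleCoeff_eq_sum (hC : IsStructConst h C) (h0 : ∀ m (k : ℤ), k < 0 → h m k = 0)
    {i j N p : ℕ} (hp : p < 2) (hij : i + j = 2 * N + p) (k r : ℕ) :
    tripleCoeff C i j k r = ∑ t ∈ range (N + 1), C (2 * t + p) i j * C r k (2 * t + p) :=
  finsum_eq_sum_range_two_mul_add N
    (fun s hs => by rw [hC.eq_zero_of_parity (by omega), zero_mul])
    (fun s hs => by rw [hC.eq_zero_of_lt h0 (by omega), zero_mul])

theorem tripleCoeff_eee (hC : IsStructConst h C) (h0 : ∀ m (k : ℤ), k < 0 → h m k = 0)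
    (a b c l : ℕ) :
    tripleCoeff C (2 * a) (2 * b) (2 * c) (2 * l) = if l = a + b + c then 1 else 0 := by
  rw [hC.tripleCoeff_eq_sum h0 (N := a + b) (p := 0) (by norm_num) (by ring)]
  simp only [add_zero, hC.even_even_even, boole_mul, sum_ite_eq', mem_range, lt_add_one, if_true]
  exact if_congr (by omega) rfl rfl

theorem tripleCoeff_eeo (hC : IsStructConst h C) (h0 : ∀ m (k : ℤ), k < 0 → h m k = 0)
    (a b c l : ℕ) :
    tripleCoeff C (2 * a) (2 * b) (2 * c + 1) (2 * l + 1)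
      = (if l = a + b + c then 1 else 0) + h c ((a : ℤ) + b - l - 1) := by
  rw [hC.tripleCoeff_eq_sum h0 (N := a + b) (p := 0) (by norm_num) (by ring)]
  simp only [add_zero, hC.even_even_even, hC.comm (2 * l + 1) (2 * c + 1), hC.odd_even_odd,
    boole_mul, sum_ite_eq', mem_range, lt_add_one, if_true]
  push_cast
  exact congrArg (· + _) (if_congr (by omega) rfl rfl)

theorem tripleCoeff_eoe (hC : IsStructConst h C) (h0 : ∀ m (k : ℤ), k < 0 → h m k = 0)
    (a b c l : ℕ) :
    tripleCoeff C (2 * a) (2 * b + 1) (2 * c) (2 * l + 1)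
      = (if l = b + a + c then 1 else 0) + h (b + a) ((c : ℤ) - l - 1)
        + (if c ≤ l then h b ((a : ℤ) + c - l - 1) else 0)
        + ∑ t ∈ range a, h b ((a : ℤ) - t - 1) * h t ((c : ℤ) - l - 1) := by
  rw [hC.tripleCoeff_eq_sum h0 (N := b + a) (p := 1) (by norm_num) (by ring)]
  simp only [hC.odd_even_odd]
  rw [sum_range_succ_ite_add_mul _ (h0 _ _ (by omega))]
  simp only [mul_add, sum_add_distrib]
  rw [sum_range_mul_ite_eq_add fun t ht => h0 _ _ (by omega),
    sum_range_eq_of_forall_ge_eq_zero (n := a) (by omega) fun t ht => by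
      rw [h0 _ _ (by omega), zero_mul]]
  rw [← add_assoc]
  congr 2
  split_ifs with hcl
  · congr 1; omega
  · rfl

theorem tripleCoeff_eoo (hC : IsStructConst h C) (h0 : ∀ m (k : ℤ), k < 0 → h m k = 0)
    (a b c l : ℕ) :
    tripleCoeff C (2 * a) (2 * b + 1) (2 * c + 1) (2 * l)
      = (if l = b + a + c + 1 then 1 else 0) + h c ((b : ℤ) + a - l) + h (b + a) ((c : ℤ) - l)
        + (if c < l then h b ((a : ℤ) + c - l) else 0)
        + ∑ t ∈ range a, h b ((a : ℤ) - t - 1) * h c ((t : ℤ) - l)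
        + ∑ t ∈ range a, h b ((a : ℤ) - t - 1) * h t ((c : ℤ) - l) := by
  rw [hC.tripleCoeff_eq_sum h0 (N := b + a) (p := 1) (by norm_num) (by ring)]
  simp only [hC.odd_even_odd, hC.even_odd_odd, add_assoc _ c 1]
  rw [sum_range_succ_ite_add_mul _ (h0 _ _ (by omega))]
  simp only [mul_add, sum_add_distrib]
  rw [sum_range_mul_ite_eq_add fun t ht => h0 _ _ (by omega),
    sum_range_eq_of_forall_ge_eq_zero (n := a) (N := b + a) (by omega) fun t ht => by
      rw [h0 _ _ (by omega), zero_mul],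
    sum_range_eq_of_forall_ge_eq_zero (n := a) (N := b + a) (by omega) fun t ht => by
      rw [h0 _ _ (by omega), zero_mul]]
  push_cast
  simp only [add_assoc]
  congr 4
  split_ifs <;> first | omega | rfl | (congr 1; omega)

theorem tripleCoeff_ooe (hC : IsStructConst h C) (h0 : ∀ m (k : ℤ), k < 0 → h m k = 0)
    (a b c l : ℕ) :
    tripleCoeff C (2 * a + 1) (2 * b + 1) (2 * c) (2 * l)
      = (if l = b + a + 1 + c then 1 else 0)
        + (if c ≤ l then h a ((b : ℤ) + c - l) + h b ((a : ℤ) + c - l) else 0) := by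
  rw [hC.tripleCoeff_eq_sum h0 (N := b + a + 1) (p := 0) (by norm_num) (by ring)]
  simp only [add_zero, hC.even_odd_odd, hC.even_even_even, add_assoc _ (h a _), add_comm c]
  rw [sum_range_succ_ite_add_mul _ (by rw [h0 _ _ (by omega), h0 _ _ (by omega), add_zero]),
    sum_range_mul_ite_eq_add fun t ht => by rw [h0 _ _ (by omega), h0 _ _ (by omega), add_zero]]
  congr 1
  split_ifs
  · congr 2 <;> omega
  · rfl

theorem tripleCoeff_ooo (hC : IsStructConst h C) (h0 : ∀ m (k : ℤ), k < 0 → h m k = 0)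
    (a b c l : ℕ) :
    tripleCoeff C (2 * a + 1) (2 * b + 1) (2 * c + 1) (2 * l + 1)
      = (if l = b + a + 1 + c then 1 else 0) + h c ((b : ℤ) + a - l)
        + (if c ≤ l then h a ((b : ℤ) + c - l) + h b ((a : ℤ) + c - l) else 0)
        + ∑ u ∈ range (b + 1), h a ((b : ℤ) - u) * h c ((u : ℤ) - l - 1)
        + ∑ u ∈ range (a + 1), h b ((a : ℤ) - u) * h c ((u : ℤ) - l - 1) := by
  rw [hC.tripleCoeff_eq_sum h0 (N := b + a + 1) (p := 0) (by norm_num) (by ring)]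
  simp only [add_zero, hC.even_odd_odd, hC.comm (2 * l + 1) (2 * c + 1), hC.odd_even_odd,
    add_assoc _ (h a _), add_comm c]
  rw [sum_range_succ_ite_add_mul _ (by rw [h0 _ _ (by omega), h0 _ _ (by omega), add_zero])]
  simp only [mul_add, sum_add_distrib]
  rw [sum_range_mul_ite_eq_add fun t ht => by rw [h0 _ _ (by omega), h0 _ _ (by omega), add_zero]]
  simp only [add_mul, sum_add_distrib]
  rw [sum_range_eq_of_forall_ge_eq_zero (n := b + 1) (by omega) fun t ht => by
      rw [h0 _ _ (by omega), zero_mul],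
    sum_range_eq_of_forall_ge_eq_zero (n := a + 1) (N := b + a + 1) (by omega) fun t ht => by
      rw [h0 _ _ (by omega), zero_mul]]
  rw [show ((b + a + 1 : ℕ) : ℤ) - l - 1 = b + a - l by push_cast; ring]
  simp only [add_assoc]
  congr 3
  split_ifs
  · congr 2 <;> omega
  · rfl

theorem tripleCoeff_eoe_of_rel₁ (hC : IsStructConst h C) (h0 : ∀ m (k : ℤ), k < 0 → h m k = 0)
    (hR : QuadraticRelation₁ h) (a b c l : ℕ) :
    tripleCoeff C (2 * a) (2 * b + 1) (2 * c) (2 * l + 1)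
      = (if l = b + a + c then 1 else 0) + h b ((a : ℤ) + c - l - 1) := by
  have key := hR.add_sum_eq h0 b a ((c : ℤ) - l - 1)
  rw [show (a : ℤ) + (c - l - 1) = a + c - l - 1 by ring] at key
  rw [hC.tripleCoeff_eoe h0]
  split_ifs at key ⊢ <;> first | omega | linear_combination key

theorem tripleCoeff_eoo_of_rels (hC : IsStructConst h C) (h0 : ∀ m (k : ℤ), k < 0 → h m k = 0)
    (hR₁ : QuadraticRelation₁ h) (hR₂ : QuadraticRelation₂ h) (a b c l : ℕ) :
    tripleCoeff C (2 * a) (2 * b + 1) (2 * c + 1) (2 * l)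
      = (if l = b + a + c + 1 then 1 else 0)
        + (if a ≤ l then h c ((b : ℤ) + a - l) + h b ((a : ℤ) + c - l) else 0) := by
  have key₁ := hR₁.add_sum_eq h0 b a ((c : ℤ) - l)
  have key₂ := hR₂.sum_range_eq h0 b a c l
  rw [show (a : ℤ) + (c - l) = a + c - l by ring] at key₁
  rw [show (c : ℤ) + a - l = a + c - l by ring] at key₂
  rw [hC.tripleCoeff_eoo h0]
  split_ifs at key₁ key₂ ⊢ <;> first | omega | linear_combination key₁ + key₂

theorem tripleCoeff_ooo_of_rel₂ (hC : IsStructConst h C) (h0 : ∀ m (k : ℤ), k < 0 → h m k = 0)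
    (hR : QuadraticRelation₂ h) (a b c l : ℕ) :
    tripleCoeff C (2 * a + 1) (2 * b + 1) (2 * c + 1) (2 * l + 1)
      = (if l = a + b + c + 1 then 1 else 0)
        + (1 - (if l < b then 1 else 0) - (if l < c then 1 else 0)) * h a ((b : ℤ) + c - l)
        + (1 - (if l < a then 1 else 0) - (if l < c then 1 else 0)) * h b ((a : ℤ) + c - l)
        + (1 - (if l < a then 1 else 0) - (if l < b then 1 else 0)) * h c ((a : ℤ) + b - l) := by
  have key₁ := hR.sum_range_succ_eq h0 a b c l
  have key₂ := hR.sum_range_succ_eq h0 b a c l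
  rw [show (c : ℤ) + b - l = b + c - l by ring] at key₁
  rw [show (b : ℤ) + a - l = a + b - l by ring, show (c : ℤ) + a - l = a + c - l by ring] at key₂
  rw [hC.tripleCoeff_ooo h0, show (b : ℤ) + a - l = a + b - l by ring]
  split_ifs at key₁ key₂ ⊢ <;> first | omega | linear_combination key₁ + key₂

theorem tripleCoeff_swap_of_rels (hC : IsStructConst h C) (h0 : ∀ m (k : ℤ), k < 0 → h m k = 0)
    (hR₁ : QuadraticRelation₁ h) (hR₂ : QuadraticRelation₂ h) (i j k r : ℕ) :
    tripleCoeff C i j k r = tripleCoeff C i k j r := by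
  rcases Nat.even_or_odd' i with ⟨a, rfl | rfl⟩ <;>
    rcases Nat.even_or_odd' j with ⟨b, rfl | rfl⟩ <;>
    rcases Nat.even_or_odd' k with ⟨c, rfl | rfl⟩ <;> rcases Nat.even_or_odd' r with ⟨l, rfl | rfl⟩
  all_goals try rw [hC.tripleCoeff_eq_zero (by omega), hC.tripleCoeff_eq_zero (by omega)]
  · rw [hC.tripleCoeff_eee h0, hC.tripleCoeff_eee h0]; ring_nf
  · rw [hC.tripleCoeff_eeo h0, hC.tripleCoeff_eoe_of_rel₁ h0 hR₁]; ring_nf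
  · rw [hC.tripleCoeff_eeo h0, hC.tripleCoeff_eoe_of_rel₁ h0 hR₁]; ring_nf
  · rw [hC.tripleCoeff_eoo_of_rels h0 hR₁ hR₂, hC.tripleCoeff_eoo_of_rels h0 hR₁ hR₂]; ring_nf
  · rw [hC.tripleCoeff_comm (2 * a + 1), hC.tripleCoeff_comm (2 * a + 1),
      hC.tripleCoeff_eoe_of_rel₁ h0 hR₁, hC.tripleCoeff_eoe_of_rel₁ h0 hR₁]; ring_nf
  · rw [hC.tripleCoeff_comm (2 * a + 1) (2 * b), hC.tripleCoeff_eoo_of_rels h0 hR₁ hR₂,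
      hC.tripleCoeff_ooe h0]; ring_nf
  · rw [hC.tripleCoeff_comm (2 * a + 1) (2 * c), hC.tripleCoeff_eoo_of_rels h0 hR₁ hR₂,
      hC.tripleCoeff_ooe h0]; ring_nf
  · rw [hC.tripleCoeff_ooo_of_rel₂ h0 hR₂, hC.tripleCoeff_ooo_of_rel₂ h0 hR₂]; ring_nf

theorem rel₁_of_swap (hC : IsStructConst h C) (h0 : ∀ m (k : ℤ), k < 0 → h m k = 0)
    (hA : ∀ i j k r, tripleCoeff C i j k r = tripleCoeff C i k j r) : QuadraticRelation₁ h := by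
  intro m k n
  have key := hA (2 * n) (2 * (k + 1)) (2 * m + 1) (2 * 0 + 1)
  rw [hC.tripleCoeff_eeo h0, hC.tripleCoeff_eoe h0] at key
  push_cast at key
  simp (disch := omega) only [if_neg, sub_zero, zero_add, add_zero, add_sub_cancel_right,
    sum_range_reflect_mul (h m) (h · k)] at key
  rwa [show (n : ℤ) + (k + 1) - 1 = k + n by ring] at key

theorem rel₂_of_swap (hC : IsStructConst h C) (h0 : ∀ m (k : ℤ), k < 0 → h m k = 0)
    (hA : ∀ i j k r, tripleCoeff C i j k r = tripleCoeff C i k j r) : QuadraticRelation₂ h := by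
  intro m n k hk
  have key := hA (2 * n + 1) (2 * k) (2 * m + 1) (2 * 0)
  rw [hC.tripleCoeff_comm (2 * n + 1), hC.tripleCoeff_eoo h0, hC.tripleCoeff_ooe h0] at key
  have hconv := (rel₁_of_swap hC h0 hA).add_sum_eq h0 n k m
  push_cast at key
  simp (disch := omega) only [if_neg, if_pos, sub_zero, zero_add, add_zero] at key hconv
  have hcomm : ∑ t ∈ range k, h n ((k : ℤ) - t - 1) * h m t
      = ∑ t ∈ range k, h m t * h n ((k : ℤ) - t - 1) := sum_congr rfl fun _ _ => mul_comm _ _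
  rw [add_comm (n : ℤ)] at key
  linear_combination key - hconv - hcomm

theorem of_formulas (H : ℕ → ℤ → R)
    (hC1 : ∀ l n m : ℕ, C (2*l) (2*n) (2*m) = if l = n + m then 1 else 0)
    (hC2 : ∀ l n m : ℕ, C (2*l+1) (2*n) (2*m) = 0)
    (hC3 : ∀ l n m : ℕ, C (2*l+1) (2*n) (2*m+1)
            = (if l = m + n then 1 else 0) + H (2*m+1) (2*((n:ℤ) - l) - 1))
    (hC4 : ∀ l n m : ℕ, C (2*l+1) (2*m+1) (2*n)
            = (if l = m + n then 1 else 0) + H (2*m+1) (2*((n:ℤ) - l) - 1))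
    (hC5 : ∀ l n m : ℕ, C (2*l) (2*n) (2*m+1) = 0)
    (hC6 : ∀ l n m : ℕ, C (2*l) (2*m+1) (2*n) = 0)
    (hC7 : ∀ l n m : ℕ, C (2*l) (2*n+1) (2*m+1)
            = (if l = m + n + 1 then 1 else 0)
              + H (2*n+1) (2*((m:ℤ) - l) + 1) + H (2*m+1) (2*((n:ℤ) - l) + 1))
    (hC8 : ∀ l n m : ℕ, C (2*l+1) (2*n+1) (2*m+1) = 0) :
    IsStructConst (fun m (k : ℤ) => H (2 * m + 1) (2 * k + 1)) C where
  even_even_even := hC1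
  odd_even_even := hC2
  odd_even_odd l n m := by rw [hC3]; ring_nf
  even_even_odd := hC5
  even_odd_odd := hC7
  odd_odd_odd := hC8
  comm r i j := by
    rcases Nat.even_or_odd' r with ⟨l, rfl | rfl⟩ <;>
      rcases Nat.even_or_odd' i with ⟨n, rfl | rfl⟩ <;>
      rcases Nat.even_or_odd' j with ⟨m, rfl | rfl⟩
    · rw [hC1, hC1, add_comm]
    · rw [hC5, hC6]
    · rw [hC5, hC6]
    · rw [hC7, hC7, add_comm m, add_right_comm]
    · rw [hC2, hC2]
    · rw [hC3, hC4]
    · rw [hC3, hC4]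
    · rw [hC8, hC8]

end IsStructConst

theorem quadraticRelation₁_iff (H : ℕ → ℤ → R) :
    (∀ m k n : ℕ, 1 ≤ n →
        H (2*m+1) (2*((k:ℤ) + n) + 1) - H (2*(m+n)+1) (2*(k:ℤ) + 1)
          - ∑ s ∈ range n, H (2*m+1) (2*(s:ℤ)+1) * H (2*(n-s)-1) (2*(k:ℤ)+1) = 0)
      ↔ QuadraticRelation₁ fun m (k : ℤ) => H (2 * m + 1) (2 * k + 1) := by
  have hsum : ∀ m k n : ℕ,
      ∑ s ∈ range n, H (2*m+1) (2*(s:ℤ)+1) * H (2*(n-s)-1) (2*(k:ℤ)+1)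
        = ∑ s ∈ range n, H (2*m+1) (2*(s:ℤ)+1) * H (2*(n-s-1)+1) (2*(k:ℤ)+1) :=
    fun m k n => sum_congr rfl fun s hs => by
      rw [show 2 * (n - s) - 1 = 2 * (n - s - 1) + 1 by have := mem_range.1 hs; omega]
  refine ⟨fun hR m k n => ?_, fun hR m k n _ => ?_⟩
  · beta_reduce
    rcases Nat.eq_zero_or_pos n with rfl | hn
    · simp
    · have hmkn := hR m k n hn
      rw [hsum] at hmkn
      linear_combination hmkn
  · have hmkn := hR m k n
    beta_reduce at hmkn
    rw [hsum, hmkn]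
    ring

theorem quadraticRelation₂_iff (H : ℕ → ℤ → R) :
    (∀ m n k : ℕ, 1 ≤ k →
        H (2*m+1) (2*((k:ℤ) + n) + 1) + H (2*n+1) (2*((k:ℤ) + m) + 1)
          + ∑ l ∈ range k, H (2*m+1) (2*(l:ℤ)+1) * H (2*n+1) (2*((k:ℤ)-l)-1) = 0)
      ↔ QuadraticRelation₂ fun m (k : ℤ) => H (2 * m + 1) (2 * k + 1) := by
  have hsum : ∀ m n k : ℕ,
      ∑ l ∈ range k, H (2*m+1) (2*(l:ℤ)+1) * H (2*n+1) (2*((k:ℤ)-l)-1)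
        = ∑ l ∈ range k, H (2*m+1) (2*(l:ℤ)+1) * H (2*n+1) (2*((k:ℤ)-l-1)+1) :=
    fun m n k => sum_congr rfl fun l _ => by ring_nf
  simp only [QuadraticRelation₂, hsum]

/-- The quadratic relations on the parameters `H^{2m+1}_{2k+1}` are equivalent to the
associativity of the multiplication defined by the structure constants `C^l_{jk}`.
Here `H : ℕ → ℤ → ℂ` records `H^a_b`, extended by zero whenever `b ≤ 0` or `b` is even,
and `C r j k` denotes `C^r_{jk}`.  The (a priori infinite) associativity sums have
finitely many nonzero terms and are expressed via `finsum`. -/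
theorem quadratic_relations_iff_associativity
    (H : ℕ → ℤ → ℂ)
    (hH0 : ∀ (a : ℕ) (b : ℤ), (b ≤ 0 ∨ Even b) → H a b = 0)
    (C : ℕ → ℕ → ℕ → ℂ)
    (hC1 : ∀ l n m : ℕ, C (2*l) (2*n) (2*m) = if l = n + m then 1 else 0)
    (hC2 : ∀ l n m : ℕ, C (2*l+1) (2*n) (2*m) = 0)
    (hC3 : ∀ l n m : ℕ, C (2*l+1) (2*n) (2*m+1)
            = (if l = m + n then 1 else 0) + H (2*m+1) (2*((n:ℤ) - l) - 1))
    (hC4 : ∀ l n m : ℕ, C (2*l+1) (2*m+1) (2*n)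
            = (if l = m + n then 1 else 0) + H (2*m+1) (2*((n:ℤ) - l) - 1))
    (hC5 : ∀ l n m : ℕ, C (2*l) (2*n) (2*m+1) = 0)
    (hC6 : ∀ l n m : ℕ, C (2*l) (2*m+1) (2*n) = 0)
    (hC7 : ∀ l n m : ℕ, C (2*l) (2*n+1) (2*m+1)
            = (if l = m + n + 1 then 1 else 0)
              + H (2*n+1) (2*((m:ℤ) - l) + 1) + H (2*m+1) (2*((n:ℤ) - l) + 1))
    (hC8 : ∀ l n m : ℕ, C (2*l+1) (2*n+1) (2*m+1) = 0) :
    ((∀ m k n : ℕ, 1 ≤ n →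
        H (2*m+1) (2*((k:ℤ) + n) + 1) - H (2*(m+n)+1) (2*(k:ℤ) + 1)
          - ∑ s ∈ range n, H (2*m+1) (2*(s:ℤ)+1) * H (2*(n-s)-1) (2*(k:ℤ)+1) = 0) ∧
     (∀ m n k : ℕ, 1 ≤ k →
        H (2*m+1) (2*((k:ℤ) + n) + 1) + H (2*n+1) (2*((k:ℤ) + m) + 1)
          + ∑ l ∈ range k, H (2*m+1) (2*(l:ℤ)+1) * H (2*n+1) (2*((k:ℤ)-l)-1) = 0))
    ↔ (∀ i j k r : ℕ, ∑ᶠ s : ℕ, (C s i j * C r k s - C s i k * C r j s) = 0) := by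
  have hC := IsStructConst.of_formulas H hC1 hC2 hC3 hC4 hC5 hC6 hC7 hC8
  have h0 : ∀ m (k : ℤ), k < 0 → H (2 * m + 1) (2 * k + 1) = 0 :=
    fun m k hk => hH0 _ _ (Or.inl (by omega))
  rw [quadraticRelation₁_iff, quadraticRelation₂_iff]
  simp only [hC.finsum_sub_eq h0, sub_eq_zero]
  exact ⟨fun ⟨hR₁, hR₂⟩ => hC.tripleCoeff_swap_of_rels h0 hR₁ hR₂,
    fun hA => ⟨hC.rel₁_of_swap h0 hA, hC.rel₂_of_swap h0 hA⟩⟩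
end

section
/- Let H^i_k ∈ ℂ (i ≥ 1, k ≥ 0) and let p_i = z^i + H^i_0 + ∑_{k≥1} H^i_k z^{−k} be the Σ₁ family. Suppose the family {p_i}_{i≥1} is multiplicatively closed and z² p_i lies in the ℂ-linear span of the family for every i ≥ 1. Then H^{2n}_k = 0 for all n ≥ 1 and k ≥ 1, and H^{2n}_0 = −(−H²₀)^n for all n ≥ 1; that is, p_{2n} = z^{2n} − (−H²₀)^n for all n ≥ 1. -/
noncomputable section

/-- `z^j` viewed as a formal Laurent series in `t = z⁻¹` (so `z^j = t^(-j)`). -/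
def zp (j : ℤ) : LaurentSeries ℂ := HahnSeries.single (-j) 1

/-- The `Σ₁` family `p_i = z^i + H^i_0 + ∑_{k ≥ 1} H^i_k z^(-k)`, `i ≥ 1`. -/
def sigma1 (H : ℕ → ℕ → ℂ) (i : ℕ) : LaurentSeries ℂ :=
  zp i + HahnSeries.ofPowerSeries ℤ ℂ (PowerSeries.mk fun k => H i k)

/-!
A member of the span of the `p_i` is determined by its polar part (its coefficients of `z^m`,
`m ≥ 1`), because the polar part of `p_i` is exactly `z^i`. The product
`(p_2 - z^2 - H²₀) p_1` lies in the span by multiplicative closedness and has no polar part,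
so it vanishes and `p_2 = z^2 + H²₀`. Inductively, if `p_{2n} = z^{2n} + d`, comparing polar
parts gives `z^2 p_{2n} = p_{2n+2} + d p_2`, whence `p_{2n+2} = z^{2n+2} - d H²₀`.
-/

open HahnSeries

lemma zp_mul_zp (a b : ℤ) : zp a * zp b = zp (a + b) := by
  rw [zp, zp, zp, single_mul_single, one_mul, neg_add]

lemma coeff_zp (j n : ℤ) : (zp j).coeff n = if n = -j then 1 else 0 := by
  simp [zp, coeff_single]

abbrev sigma1Span (H : ℕ → ℕ → ℂ) : Submodule ℂ (LaurentSeries ℂ) :=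
  Submodule.span ℂ (sigma1 H '' {i | 1 ≤ i})

section Sigma1

variable (H : ℕ → ℕ → ℂ)

lemma coeff_sigma1 (i : ℕ) (n : ℤ) :
    (sigma1 H i).coeff n = (if n = -i then 1 else 0) + if n < 0 then 0 else H i n.natAbs := by
  rw [sigma1, coeff_add, coeff_zp, PowerSeries.coeff_coe, PowerSeries.coeff_mk]

lemma coeff_sigma1_neg_natCast (i : ℕ) {m : ℕ} (hm : 1 ≤ m) :
    (sigma1 H i).coeff (-m) = if i = m then 1 else 0 := by
  rw [coeff_sigma1, if_pos (show (-m : ℤ) < 0 by omega), add_zero]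
  simp [eq_comm]

lemma neg_le_orderTop_sigma1 (i : ℕ) : ((-i : ℤ) : WithTop ℤ) ≤ (sigma1 H i).orderTop := by
  refine le_orderTop_iff_forall.2 fun n hn => ?_
  have hn : n < -i := by exact_mod_cast hn
  rw [coeff_sigma1, if_neg (by omega), if_pos (by omega), add_zero]

lemma one_le_orderTop_sigma1_sub (i : ℕ) :
    1 ≤ (sigma1 H i - zp i - C (H i 0)).orderTop := by
  refine le_orderTop_iff_forall.2 fun n hn => ?_
  have hn : n ≤ 0 := Int.lt_add_one_iff.1 (by exact_mod_cast hn)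
  rw [coeff_sub, coeff_sub, coeff_sigma1, coeff_zp, C_apply, coeff_single]
  rcases hn.lt_or_eq with hn | rfl
  · simp [hn, hn.ne]
  · simp

lemma sigma1_mem_sigma1Span {i : ℕ} (hi : 1 ≤ i) : sigma1 H i ∈ sigma1Span H :=
  Submodule.subset_span ⟨i, hi, rfl⟩

lemma coeff_linearCombination_sigma1 (l : ℕ →₀ ℂ) {m : ℕ} (hm : 1 ≤ m) :
    (Finsupp.linearCombination ℂ (sigma1 H) l).coeff (-m) = l m := by
  rw [Finsupp.linearCombination_apply, Finsupp.sum, coeff_sum, Finset.sum_eq_single m]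
  · simp [coeff_sigma1_neg_natCast H m hm]
  · intro j _ hj
    simp [coeff_sigma1_neg_natCast H j hm, hj]
  · intro hm'
    simp [Finsupp.notMem_support_iff.1 hm']

lemma eq_zero_of_mem_sigma1Span {q : LaurentSeries ℂ} (hq : q ∈ sigma1Span H)
    (h : ∀ m : ℕ, 1 ≤ m → q.coeff (-m) = 0) : q = 0 := by
  obtain ⟨l, hl, rfl⟩ := (Finsupp.mem_span_image_iff_linearCombination ℂ).1 hq
  suffices l = 0 by rw [this, map_zero]
  ext m
  rcases Nat.eq_zero_or_pos m with rfl | hm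
  · exact Finsupp.notMem_support_iff.1 fun h0 => absurd (hl h0) (by simp)
  · rw [← coeff_linearCombination_sigma1 H l hm, h m hm, Finsupp.coe_zero, Pi.zero_apply]

lemma sigma1_eq_zp_add_C_iff (i : ℕ) (d : ℂ) :
    sigma1 H i = zp i + C d ↔ ∀ k, H i k = if k = 0 then d else 0 := by
  rw [sigma1, ← ofPowerSeries_C, add_right_inj, ofPowerSeries_injective.eq_iff,
    PowerSeries.ext_iff]
  simp [PowerSeries.coeff_C]

lemma sigma1_eq_zp_add_C_of_mul_mem {i : ℕ} (hmul : sigma1 H i * sigma1 H 1 ∈ sigma1Span H)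
    (hz : zp i * sigma1 H 1 ∈ sigma1Span H) : sigma1 H i = zp i + C (H i 0) := by
  set r := sigma1 H i - zp i - C (H i 0)
  have hr : r * sigma1 H 1 ∈ sigma1Span H := by
    have : r * sigma1 H 1 =
        sigma1 H i * sigma1 H 1 - zp i * sigma1 H 1 - H i 0 • sigma1 H 1 := by
      rw [← C_mul_eq_smul]; ring
    rw [this]
    exact sub_mem (sub_mem hmul hz) (Submodule.smul_mem _ _ (sigma1_mem_sigma1Span H le_rfl))
  have horder : 0 ≤ (r * sigma1 H 1).orderTop :=
    calc (0 : WithTop ℤ) = 1 + ((-(1 : ℕ) : ℤ) : WithTop ℤ) := by rfl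
      _ ≤ r.orderTop + (sigma1 H 1).orderTop :=
        add_le_add (one_le_orderTop_sigma1_sub H i) (neg_le_orderTop_sigma1 H 1)
      _ ≤ _ := orderTop_add_le_mul
  have hr0 : r * sigma1 H 1 = 0 := eq_zero_of_mem_sigma1Span H hr fun m hm =>
    coeff_eq_zero_of_lt_orderTop <|
      lt_of_lt_of_le (by exact_mod_cast (by omega : -(m : ℤ) < 0)) horder
  have hp1 : sigma1 H 1 ≠ 0 := fun h => by
    simpa [h] using coeff_sigma1_neg_natCast H 1 le_rfl
  rw [← sub_eq_zero, ← sub_sub]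
  exact (mul_eq_zero.1 hr0).resolve_right hp1

lemma sigma1_add_two_eq {i : ℕ} {c d : ℂ} (h2 : sigma1 H 2 = zp 2 + C c)
    (hi : sigma1 H i = zp i + C d) (hmem : zp 2 * sigma1 H i ∈ sigma1Span H) :
    sigma1 H (i + 2) = zp (i + 2) - C (d * c) := by
  have hprod : zp 2 * sigma1 H i = zp (i + 2) + d • zp 2 := by
    rw [hi, mul_add, zp_mul_zp, mul_comm, C_mul_eq_smul, add_comm (2 : ℤ)]
  have hmem' : zp 2 * sigma1 H i - sigma1 H (i + 2) - d • sigma1 H 2 ∈ sigma1Span H :=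
    sub_mem (sub_mem hmem (sigma1_mem_sigma1Span H (by omega)))
      (Submodule.smul_mem _ _ (sigma1_mem_sigma1Span H (by omega)))
  have hzero := eq_zero_of_mem_sigma1Span H hmem' fun m hm => by
    rw [hprod, coeff_sub, coeff_sub, coeff_add, coeff_smul, coeff_smul, coeff_zp, coeff_zp,
      coeff_sigma1_neg_natCast H _ hm, coeff_sigma1_neg_natCast H _ hm]
    simp only [neg_inj]
    split_ifs <;> first | (exfalso; omega) | ring
  simp only [hprod, h2, ← C_mul_eq_smul] at hzero
  rw [map_mul]
  linear_combination -hzero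

lemma sigma1_two_mul_eq {c : ℂ} (h2 : sigma1 H 2 = zp 2 + C c)
    (hz2 : ∀ i : ℕ, 1 ≤ i → zp 2 * sigma1 H i ∈ sigma1Span H) {n : ℕ} (hn : 1 ≤ n) :
    sigma1 H (2 * n) = zp (2 * n) - C ((-c) ^ n) := by
  induction n, hn using Nat.le_induction with
  | base => simpa using h2
  | succ n hn ih =>
    rw [sub_eq_add_neg, ← map_neg] at ih
    rw [mul_add_one, sigma1_add_two_eq H h2 ih (hz2 _ (by omega))]
    congr 2
    ring

end Sigma1

theorem sigma1_even_elements (H : ℕ → ℕ → ℂ)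
    (hmul : ∀ i j : ℕ, 1 ≤ i → 1 ≤ j →
      sigma1 H i * sigma1 H j ∈ Submodule.span ℂ (sigma1 H '' {i | 1 ≤ i}))
    (hz2 : ∀ i : ℕ, 1 ≤ i →
      zp 2 * sigma1 H i ∈ Submodule.span ℂ (sigma1 H '' {i | 1 ≤ i})) :
    (∀ n k : ℕ, 1 ≤ n → 1 ≤ k → H (2*n) k = 0) ∧
    (∀ n : ℕ, 1 ≤ n → H (2*n) 0 = -(-H 2 0)^n) ∧
    (∀ n : ℕ, 1 ≤ n → sigma1 H (2*n) = zp (2*n) - HahnSeries.C ((-H 2 0)^n)) := by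
  have h2 := sigma1_eq_zp_add_C_of_mul_mem H (hmul 2 1 (by norm_num) le_rfl) (hz2 1 le_rfl)
  have heven n (hn : 1 ≤ n) := sigma1_two_mul_eq H h2 hz2 hn
  have hH n (hn : 1 ≤ n) := (sigma1_eq_zp_add_C_iff H (2 * n) (-(-H 2 0) ^ n)).1 <| by
    rw [heven n hn, map_neg, ← sub_eq_add_neg, Nat.cast_mul, Nat.cast_ofNat]
  refine ⟨fun n k hn hk => ?_, fun n hn => ?_, heven⟩
  · simpa [Nat.one_le_iff_ne_zero.1 hk] using hH n hn k
  · simpa using hH n hn 0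

end
end

section
/- Let H^i_k ∈ ℂ (i ≥ 1, k ≥ 0) and let p_i = z^i + H^i_0 + ∑_{k≥1} H^i_k z^{−k} be the Σ₁ family. Suppose the family {p_i}_{i≥1} is multiplicatively closed and z² p_i lies in the ℂ-linear span of the family for every i ≥ 1. Then in ℂ((z⁻¹)): p₂ = p₁² − 2H¹₀ p₁ and p₃ = p₁³ − 3H¹₀ p₁² − (3H¹₁ − 3(H¹₀)²) p₁; equivalently, in the shifted variables p̃_k = p_k − H^k_0 one has z² = (p₁ − H¹₀)² − 2H¹₁ and p₃ − H³₀ = (p₁ − H¹₀)³ − 3H¹₁ (p₁ − H¹₀), i.e. the Σ₁ family satisfies the big-cell (twisted cubic) relations after the shift p̃_k = p_k − H^k_0. -/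
/-!
Each `p_i` is `z^i` times a power series in `z⁻¹` with constant term `1`, so an element `v` of
the span of the family whose coefficients of `z^j` vanish for `j ≥ 4` equals
`∑_{j ≤ 3} [z^j]v • p_j`. Applied to `p₁²`, `z² p₁` and `p₁ p₂` this gives three linear
relations; subtracting the last two and cancelling `p₁` yields `p₂ = z² + H²₀`, and comparing a
few coefficients of `z⁰` and `z⁻¹` determines `H²₀` and `H³₀`. The twisted cubic relations are
then polynomial identities.
-/

noncomputable section

section Biorthogonal

variable {ι R M : Type*} [Semiring R] [AddCommMonoid M] [Module R M]

theorem eq_sum_smul_of_mem_span_of_biorthogonal {p : ι → M} {φ : ι → M →ₗ[R] R} {s : Set ι}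
    (hφ_self : ∀ i ∈ s, φ i (p i) = 1) (hφ_ne : ∀ i ∈ s, ∀ j ∈ s, i ≠ j → φ j (p i) = 0)
    {t : Finset ι} (hts : ↑t ⊆ s) {v : M} (hv : v ∈ Submodule.span R (p '' s))
    (hvt : ∀ j ∈ s, j ∉ t → φ j v = 0) : v = ∑ j ∈ t, φ j v • p j := by
  classical
  obtain ⟨l, hls, rfl⟩ := (Finsupp.mem_span_image_iff_linearCombination R).mp hv
  have hφl : ∀ j ∈ s, φ j (Finsupp.linearCombination R p l) = l j := by
    intro j hj
    rw [Finsupp.linearCombination_apply, map_finsuppSum, Finsupp.sum_eq_single j]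
    · simp [hφ_self j hj]
    · intro i hi hij
      rw [map_smul, hφ_ne i (hls (Finsupp.mem_support_iff.mpr hi)) j hj hij, smul_zero]
    · simp
  have hlt : l.support ⊆ t := fun i hi => by
    by_contra hit
    exact Finsupp.mem_support_iff.mp hi (hφl i (hls hi) ▸ hvt i (hls hi) hit)
  calc Finsupp.linearCombination R p l = ∑ j ∈ t, l j • p j := by
        rw [Finsupp.linearCombination_apply, Finsupp.sum_of_support_subset l hlt _ (by simp)]
    _ = _ := Finset.sum_congr rfl fun j hj => by rw [hφl j (hts hj)]

end Biorthogonal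

lemma zp_add (a b : ℤ) : zp (a + b) = zp a * zp b := by
  rw [zp, zp, zp, HahnSeries.single_mul_single, neg_add, one_mul]

lemma coeff_zp_mul (n g : ℤ) (x : LaurentSeries ℂ) : (zp n * x).coeff g = x.coeff (g + n) := by
  rw [zp, HahnSeries.coeff_single_mul, one_mul, sub_neg_eq_add]

section Sigma1

open HahnSeries (C)

variable (H : ℕ → ℕ → ℂ)

open PowerSeries in
def sigma1PowerSeries (i : ℕ) : PowerSeries ℂ := 1 + X ^ i * mk (H i)

lemma coeff_sigma1PowerSeries {i : ℕ} (hi : 1 ≤ i) (n : ℕ) :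
    PowerSeries.coeff n (sigma1PowerSeries H i) =
      if n = 0 then 1 else if i ≤ n then H i (n - i) else 0 := by
  simp only [sigma1PowerSeries, map_add, PowerSeries.coeff_one, PowerSeries.coeff_X_pow_mul',
    PowerSeries.coeff_mk]
  split_ifs <;> simp_all

lemma sigma1_eq_zp_mul (i : ℕ) :
    sigma1 H i = zp i * HahnSeries.ofPowerSeries ℤ ℂ (sigma1PowerSeries H i) := by
  rw [sigma1PowerSeries, map_add, map_mul, map_one, map_pow, HahnSeries.ofPowerSeries_X,
    HahnSeries.single_pow, mul_add, mul_one, ← mul_assoc, zp, HahnSeries.single_mul_single]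
  simp [sigma1, zp]

lemma sigma1_mul_sigma1 (i j : ℕ) : sigma1 H i * sigma1 H j =
    zp (i + j) * HahnSeries.ofPowerSeries ℤ ℂ (sigma1PowerSeries H i * sigma1PowerSeries H j) := by
  rw [sigma1_eq_zp_mul, sigma1_eq_zp_mul, zp_add, map_mul]
  ring

lemma zp_mul_sigma1 (n : ℤ) (i : ℕ) : zp n * sigma1 H i =
    zp (n + i) * HahnSeries.ofPowerSeries ℤ ℂ (sigma1PowerSeries H i) := by
  rw [sigma1_eq_zp_mul, zp_add, mul_assoc]

lemma coeff_sigma1_neg {i j : ℕ} (hj : 1 ≤ j) :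
    (sigma1 H i).coeff (-j) = if i = j then 1 else 0 := by
  simp [sigma1, zp, HahnSeries.coeff_single, PowerSeries.coeff_coe, eq_comm, show 0 < j by omega]

lemma sigma1_ne_zero {i : ℕ} (hi : 1 ≤ i) : sigma1 H i ≠ 0 := fun h => by
  simpa [h] using coeff_sigma1_neg H (i := i) hi

lemma eq_sum_sigma1_of_mem_span {v : LaurentSeries ℂ}
    (hv : v ∈ Submodule.span ℂ (sigma1 H '' {i | 1 ≤ i}))
    (hv_vanish : ∀ j : ℕ, 4 ≤ j → v.coeff (-j) = 0) :
    v = C (v.coeff (-1)) * sigma1 H 1 + C (v.coeff (-2)) * sigma1 H 2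
      + C (v.coeff (-3)) * sigma1 H 3 := by
  have := eq_sum_smul_of_mem_span_of_biorthogonal (s := {i | 1 ≤ i}) (t := {1, 2, 3})
    (φ := fun j : ℕ => HahnSeries.coeff.linearMap (R := ℂ) (-(j : ℤ)))
    (fun i (hi : 1 ≤ i) => by simp [coeff_sigma1_neg H hi])
    (fun i _ j (hj : 1 ≤ j) hij => by simp [coeff_sigma1_neg H hj, hij])
    (fun j hj => by
      simp only [Finset.coe_insert, Finset.coe_singleton, Set.mem_insert_iff,
        Set.mem_singleton_iff, Set.mem_ofPred_eq] at hj ⊢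
      omega)
    hv
    (fun j (hj : 1 ≤ j) hjt => by
      simp only [Finset.mem_insert, Finset.mem_singleton, not_or] at hjt
      exact hv_vanish j (by omega))
  simpa [add_assoc, HahnSeries.C_mul_eq_smul] using this

lemma sigma1_one_mul_self_of_mem_span
    (h : sigma1 H 1 * sigma1 H 1 ∈ Submodule.span ℂ (sigma1 H '' {i | 1 ≤ i})) :
    sigma1 H 1 * sigma1 H 1 = C (2 * H 1 0) * sigma1 H 1 + sigma1 H 2 := by
  refine (eq_sum_sigma1_of_mem_span H h fun j hj => ?_).trans ?_
  · rw [sigma1_mul_sigma1, coeff_zp_mul, PowerSeries.coeff_coe, if_pos (by omega)]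
  · simp only [sigma1_mul_sigma1, coeff_zp_mul, PowerSeries.coeff_coe]
    norm_num [PowerSeries.coeff_mul, Finset.Nat.antidiagonal_succ, coeff_sigma1PowerSeries,
      two_mul]

lemma zp_two_mul_sigma1_one_of_mem_span
    (h : zp 2 * sigma1 H 1 ∈ Submodule.span ℂ (sigma1 H '' {i | 1 ≤ i})) :
    zp 2 * sigma1 H 1 = C (H 1 1) * sigma1 H 1 + C (H 1 0) * sigma1 H 2 + sigma1 H 3 := by
  refine (eq_sum_sigma1_of_mem_span H h fun j hj => ?_).trans ?_
  · rw [zp_mul_sigma1, coeff_zp_mul, PowerSeries.coeff_coe, if_pos (by omega)]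
  · simp only [zp_mul_sigma1, coeff_zp_mul, PowerSeries.coeff_coe]
    norm_num [coeff_sigma1PowerSeries]

lemma sigma1_one_mul_sigma1_two_of_mem_span
    (h : sigma1 H 1 * sigma1 H 2 ∈ Submodule.span ℂ (sigma1 H '' {i | 1 ≤ i})) :
    sigma1 H 1 * sigma1 H 2
      = C (H 2 0 + H 1 1) * sigma1 H 1 + C (H 1 0) * sigma1 H 2 + sigma1 H 3 := by
  refine (eq_sum_sigma1_of_mem_span H h fun j hj => ?_).trans ?_
  · rw [sigma1_mul_sigma1, coeff_zp_mul, PowerSeries.coeff_coe, if_pos (by omega)]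
  · simp only [sigma1_mul_sigma1, coeff_zp_mul, PowerSeries.coeff_coe]
    norm_num [PowerSeries.coeff_mul, Finset.Nat.antidiagonal_succ, coeff_sigma1PowerSeries]

lemma sigma1_two_eq
    (hB : zp 2 * sigma1 H 1 = C (H 1 1) * sigma1 H 1 + C (H 1 0) * sigma1 H 2 + sigma1 H 3)
    (hC : sigma1 H 1 * sigma1 H 2
      = C (H 2 0 + H 1 1) * sigma1 H 1 + C (H 1 0) * sigma1 H 2 + sigma1 H 3) :
    sigma1 H 2 = zp 2 + C (H 2 0) :=
  mul_left_cancel₀ (sigma1_ne_zero H le_rfl) (by rw [map_add] at hC; linear_combination hC - hB)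

lemma sigma1_constant_terms_eq
    (hA : sigma1 H 1 * sigma1 H 1 = C (2 * H 1 0) * sigma1 H 1 + sigma1 H 2)
    (hB : zp 2 * sigma1 H 1 = C (H 1 1) * sigma1 H 1 + C (H 1 0) * sigma1 H 2 + sigma1 H 3)
    (hE : sigma1 H 2 = zp 2 + C (H 2 0)) :
    H 2 0 = 2 * H 1 1 - H 1 0 ^ 2 ∧ H 3 0 = H 1 0 ^ 3 - 3 * H 1 0 * H 1 1 := by
  have hA0 := congrArg (HahnSeries.coeff · 0) hA
  have hA1 := congrArg (HahnSeries.coeff · 1) hA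
  have hB0 := congrArg (HahnSeries.coeff · 0) hB
  have hE1 := congrArg (HahnSeries.coeff · 1) hE
  rw [sigma1_mul_sigma1] at hA0 hA1
  rw [zp_mul_sigma1] at hB0
  simp only [sigma1_eq_zp_mul, coeff_zp_mul, HahnSeries.C_mul_eq_smul, HahnSeries.coeff_smul,
    smul_eq_mul, HahnSeries.coeff_add, PowerSeries.coeff_coe] at hA0 hA1 hB0 hE1
  norm_num [PowerSeries.coeff_mul, Finset.Nat.antidiagonal_succ, coeff_sigma1PowerSeries, zp,
    HahnSeries.coeff_single] at hA0 hA1 hB0 hE1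
  have h20 : H 2 0 = 2 * H 1 1 - H 1 0 ^ 2 := by linear_combination -hA0
  have h12 : H 1 2 = 0 := by linear_combination (hA1 + hE1) / 2
  exact ⟨h20, by linear_combination h12 - hB0 - H 1 0 * h20⟩

end Sigma1

/-- The `Σ₁` family satisfies the big-cell (twisted cubic) relations after the shift
`p̃_k = p_k - H^k_0`. -/
theorem sigma1_twisted_cubic (H : ℕ → ℕ → ℂ)
    (hmul : ∀ i j : ℕ, 1 ≤ i → 1 ≤ j →
      sigma1 H i * sigma1 H j ∈ Submodule.span ℂ (sigma1 H '' {i | 1 ≤ i}))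
    (hz2 : ∀ i : ℕ, 1 ≤ i →
      zp 2 * sigma1 H i ∈ Submodule.span ℂ (sigma1 H '' {i | 1 ≤ i})) :
    (sigma1 H 2 = sigma1 H 1 ^ 2 - (2 * H 1 0) • sigma1 H 1) ∧
    (sigma1 H 3 = sigma1 H 1 ^ 3 - (3 * H 1 0) • sigma1 H 1 ^ 2
        - (3 * H 1 1 - 3 * (H 1 0)^2) • sigma1 H 1) ∧
    (zp 2 = (sigma1 H 1 - HahnSeries.C (H 1 0)) ^ 2 - HahnSeries.C (2 * H 1 1)) ∧
    (sigma1 H 3 - HahnSeries.C (H 3 0)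
      = (sigma1 H 1 - HahnSeries.C (H 1 0)) ^ 3
        - (3 * H 1 1) • (sigma1 H 1 - HahnSeries.C (H 1 0))) := by
  have hA := sigma1_one_mul_self_of_mem_span H (hmul 1 1 le_rfl le_rfl)
  have hB := zp_two_mul_sigma1_one_of_mem_span H (hz2 1 le_rfl)
  have hE := sigma1_two_eq H hB
    (sigma1_one_mul_sigma1_two_of_mem_span H (hmul 1 2 le_rfl one_le_two))
  obtain ⟨h20, h30⟩ := sigma1_constant_terms_eq H hA hB hE
  have c20 := congrArg (HahnSeries.C (Γ := ℤ)) h20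
  have c30 := congrArg (HahnSeries.C (Γ := ℤ)) h30
  simp only [← HahnSeries.C_mul_eq_smul, map_mul, map_sub, map_pow, map_ofNat]
    at hA hB hE c20 c30 ⊢
  set p₁ := sigma1 H 1
  set a := HahnSeries.C (Γ := ℤ) (H 1 0)
  refine ⟨by linear_combination -hA, ?_, by linear_combination -hA - hE - c20, ?_⟩
  · linear_combination (a - p₁) * hA - p₁ * c20 - p₁ * hE - hB
  · linear_combination (a - p₁) * hA - p₁ * c20 - p₁ * hE - hB - c30

end
end

section
/- Let H³₋₂, H³₀, H⁴₋₂, H⁴₀ ∈ ℂ satisfy H⁴₀ + 2H³₀H³₋₂ − (H³₋₂)² H⁴₋₂ − (H⁴₋₂)² = 0 and (H³₀)² − (H³₋₂)² H⁴₀ − H⁴₋₂ H⁴₀ = 0, and define H^j_{−2}, H^j_0 for j ≥ 5 recursively by H^j_{−2} = H^{j−2}_0 − H^{j−2}_{−2} H⁴₋₂ and H^j_0 = −H^{j−2}_{−2} H⁴₀. Set p_j = z^j + H^j_{−2} z² + H^j_0 ∈ ℂ[z] for j ≥ 3. Then for all j, k ≥ 3 the identity p_j p_k = p_{j+k} + H^k_{−2}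 p_{j+2} + H^k_0 p_j + H^j_{−2} p_{k+2} + H^j_0 p_k + H^j_{−2} H^k_{−2} p₄ holds in ℂ[z]. -/
/-!
Write `ω` for `z²` and let `e_j = -H^j_0 - H^j_{-2} ω` be what `z^j` becomes once `p_j = 0`;
`p_4 = 0` makes `ω` a root of `ω² + H⁴₋₂ ω + H⁴₀`. Comparing the coefficients of `z²` and `1`,
the identity for `p_j p_k` says exactly that `e_{j+k} = e_j e_k` in the quadratic algebra
`R[ω]/(ω² + H⁴₋₂ ω + H⁴₀)`. There the recursion reads `e_{j+2} = ω e_j`, `e_4 = ω²`, and the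
two constraints say `e_3² = ω³`; so `e_j` behaves like `ω^{j/2}`, and multiplicativity follows
by two-step induction from the cases `j, k ∈ {3, 4}`.
-/

open Polynomial

noncomputable section

/-- The polynomial elements `p_j = z^j + H^j_{-2} z² + H^j_0` of the closed subset
`W₃ ⊂ Σ₃`, where `A j = H^j_{-2}` and `B j = H^j_0`. -/
def w3 (A B : ℕ → ℂ) (j : ℕ) : Polynomial ℂ :=
  X ^ j + C (A j) * X ^ 2 + C (B j)

theorem Nat.le_twoStepInduction {m : ℕ} {P : ℕ → Prop} (base : P m) (base_succ : P (m + 1))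
    (step : ∀ n, m ≤ n → P n → P (n + 2)) : ∀ n, m ≤ n → P n := by
  intro n hn
  obtain ⟨i, rfl⟩ := Nat.exists_eq_add_of_le hn
  induction i using Nat.twoStepInduction with
  | zero => exact base
  | one => exact base_succ
  | more i ih _ => exact step (m + i) (by omega) (ih (by omega))

open QuadraticAlgebra

section Residue

variable {R : Type*} [CommRing R] (A B : ℕ → R)

/-- `e_j = -B j - A j • ω`, with `ω` standing for `z²` and `ω² = -A 4 • ω - B 4` for `p_4 = 0`. -/
def w3Residue (j : ℕ) : QuadraticAlgebra R (-B 4) (-A 4) := ⟨-B j, -A j⟩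

theorem w3Residue_four : w3Residue A B 4 = ω ^ 2 := by
  ext <;> simp [w3Residue, pow_two]

variable {A B}

theorem w3Residue_three_sq (h1 : B 4 + 2 * B 3 * A 3 - (A 3)^2 * A 4 - (A 4)^2 = 0)
    (h2 : (B 3)^2 - (A 3)^2 * B 4 - A 4 * B 4 = 0) :
    w3Residue A B 3 ^ 2 = ω ^ 3 := by
  ext <;> simp only [w3Residue, pow_succ, pow_zero, one_mul, re_mul, im_mul, omega_re, omega_im]
  · linear_combination h2
  · linear_combination h1

theorem w3Residue_add_two (hrecA : ∀ j : ℕ, 5 ≤ j → A j = B (j-2) - A (j-2) * A 4)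
    (hrecB : ∀ j : ℕ, 5 ≤ j → B j = -A (j-2) * B 4) {j : ℕ} (hj : 3 ≤ j) :
    w3Residue A B (j + 2) = ω * w3Residue A B j := by
  ext <;> simp [w3Residue, hrecA (j + 2) (by omega), hrecB (j + 2) (by omega)] <;> ring

theorem w3Residue_add (h1 : B 4 + 2 * B 3 * A 3 - (A 3)^2 * A 4 - (A 4)^2 = 0)
    (h2 : (B 3)^2 - (A 3)^2 * B 4 - A 4 * B 4 = 0)
    (hrecA : ∀ j : ℕ, 5 ≤ j → A j = B (j-2) - A (j-2) * A 4)
    (hrecB : ∀ j : ℕ, 5 ≤ j → B j = -A (j-2) * B 4) {j k : ℕ} (hj : 3 ≤ j) (hk : 3 ≤ k) :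
    w3Residue A B (j + k) = w3Residue A B j * w3Residue A B k := by
  set e := w3Residue A B
  have four : e 4 = ω ^ 2 := w3Residue_four A B
  have add_two {n : ℕ} (hn : 3 ≤ n) : e (n + 2) = ω * e n := w3Residue_add_two hrecA hrecB hn
  have add_four {n : ℕ} (hn : 3 ≤ n) : e (n + 4) = e n * e 4 := by
    rw [four, add_two (by omega), add_two hn]
    ring
  have add_three : ∀ n, 3 ≤ n → e (n + 3) = e n * e 3 := by
    refine Nat.le_twoStepInduction ?_ ?_ fun n hn ih ↦ ?_
    · rw [add_two (n := 4) (by omega), four, ← sq, w3Residue_three_sq h1 h2]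
      ring
    · rw [mul_comm]
      exact add_four le_rfl
    · rw [show n + 2 + 3 = n + 3 + 2 by ring, add_two (by omega), ih, add_two hn]
      ring
  refine Nat.le_twoStepInduction (P := fun k ↦ e (j + k) = e j * e k) (add_three j hj)
    (add_four hj) (fun k hk ih ↦ ?_) k hk
  rw [← add_assoc, add_two (by omega), ih, add_two hk]
  ring

end Residue

theorem w3_mul_w3 {A B : ℕ → ℂ}
    (hrecA : ∀ j : ℕ, 5 ≤ j → A j = B (j-2) - A (j-2) * A 4)
    (hrecB : ∀ j : ℕ, 5 ≤ j → B j = -A (j-2) * B 4) {j k : ℕ} (hj : 3 ≤ j) (hk : 3 ≤ k)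
    (hjk : w3Residue A B (j + k) = w3Residue A B j * w3Residue A B k) :
    w3 A B j * w3 A B k
        = w3 A B (j+k) + C (A k) * w3 A B (j+2) + C (B k) * w3 A B j
          + C (A j) * w3 A B (k+2) + C (B j) * w3 A B k
          + C (A j * A k) * w3 A B 4 := by
  have hB : B (j + k) = A j * A k * B 4 - B j * B k := by
    have := congr_arg re hjk
    simp only [w3Residue, re_mul] at this
    linear_combination -this
  have hA : A (j + k) = A j * A k * A 4 - A k * B j - A j * B k := by
    have := congr_arg im hjk
    simp only [w3Residue, im_mul] at this
    linear_combination -this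
  simp only [w3, hA, hB, hrecA (j + 2) (by omega), hrecB (j + 2) (by omega),
    hrecA (k + 2) (by omega), hrecB (k + 2) (by omega), Nat.add_sub_cancel, pow_add,
    map_sub, map_mul, map_neg]
  ring

theorem w3_closed (A B : ℕ → ℂ)
    (h1 : B 4 + 2 * B 3 * A 3 - (A 3)^2 * A 4 - (A 4)^2 = 0)
    (h2 : (B 3)^2 - (A 3)^2 * B 4 - A 4 * B 4 = 0)
    (hrecA : ∀ j : ℕ, 5 ≤ j → A j = B (j-2) - A (j-2) * A 4)
    (hrecB : ∀ j : ℕ, 5 ≤ j → B j = -A (j-2) * B 4) :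
    ∀ j k : ℕ, 3 ≤ j → 3 ≤ k →
      w3 A B j * w3 A B k
        = w3 A B (j+k) + C (A k) * w3 A B (j+2) + C (B k) * w3 A B j
          + C (A j) * w3 A B (k+2) + C (B j) * w3 A B k
          + C (A j * A k) * w3 A B 4 := fun _ _ hj hk ↦
  w3_mul_w3 hrecA hrecB hj hk (w3Residue_add h1 h2 hrecA hrecB hj hk)

end
end

section
/- Let a, b, c, d ∈ ℂ satisfy d + 2ab − a²c − c² = 0 and b² − a²d − cd = 0, and set p₃ = z³ + a z² + b and p₄ = z⁴ + c z² + d in ℂ[z]. Then the following (3,4)-plane-curve identity holds in ℂ[z]: p₄³ − p₃⁴ + 4a p₃ p₄² − (3c − 2a²) p₃² p₄ − (−4b + 2ac) p₃³ − (3d + 4ab + a⁴ + a²c) p₄² − (4a²b + 8ad − 2ac² − 6bc − 2a³c) p₃ p₄ − (−3dc + 6b² − 6abc + 2a²d + a²c² + c³) p₃² − (−3d² − 2a²b² − 2a²dc − 2a⁴d + 3b²c + 2abc² − 8abd + 2a³bc) p₄ − (−4b³ − 4ad² + 6bdc − 4abd·a + 6ab²c + 2ac²d + 2a³cd − 2a²bc²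 − 2bc³) p₃ = 0, where the term −4abd·a stands for −4a²bd; i.e., with H³₋₂ = a, H³₀ = b, H⁴₋₂ = c, H⁴₀ = d, the polynomials p₃ and p₄ parameterize a plane (3,4) curve of genus zero. -/
open Polynomial

/-!
Substituting `p₃ = z³ + a z² + b` and `p₄ = z⁴ + c z² + d`, the left-hand side becomes a
polynomial identity in `z, a, b, c, d` that lies in the ideal generated by the two
associativity constraints, with explicit cofactors. It therefore holds for any element `z` of
any commutative ring, and the theorem is the case `z = X` in `ℂ[X]`.
-/

theorem curve34_eval_eq_zero {R : Type*} [CommRing R] (a b c d z : R)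
    (h1 : d + 2*a*b - a^2*c - c^2 = 0)
    (h2 : b^2 - a^2*d - c*d = 0) :
    let p3 := z^3 + a * z^2 + b
    let p4 := z^4 + c * z^2 + d
    p4^3 - p3^4 + 4*a * p3 * p4^2
      - (3*c - 2*a^2) * p3^2 * p4
      - (-4*b + 2*a*c) * p3^3
      - (3*d + 4*a*b + a^4 + a^2*c) * p4^2
      - (4*a^2*b + 8*a*d - 2*a*c^2 - 6*b*c - 2*a^3*c) * p3 * p4
      - (-3*d*c + 6*b^2 - 6*a*b*c + 2*a^2*d + a^2*c^2 + c^3) * p3^2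
      - (-3*d^2 - 2*a^2*b^2 - 2*a^2*d*c - 2*a^4*d + 3*b^2*c + 2*a*b*c^2
            - 8*a*b*d + 2*a^3*b*c) * p4
      - (-4*b^3 - 4*a*d^2 + 6*b*d*c - 4*a^2*b*d + 6*a*b^2*c + 2*a*c^2*d
            + 2*a^3*c*d - 2*a^2*b*c^2 - 2*b*c^3) * p3 = 0 := by
  intro p3 p4
  linear_combination
    (d^2 + c^2*d - 2*b^2*c + 2*a*b*d + 2*a^2*c*d - a^2*b^2 + a^4*d) * h1
    + (-c^3 + b^2 + 2*a*b*c - 2*a^2*c^2 + 2*a^3*b - a^4*c) * h2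

/-- The plane `(3,4)`-curve identity satisfied by `p₃ = z³ + a z² + b` and
`p₄ = z⁴ + c z² + d` under the associativity constraints of the stratum `Σ₃`
(with `a = H³₋₂`, `b = H³₀`, `c = H⁴₋₂`, `d = H⁴₀`). -/
theorem sigma3_34_curve (a b c d : ℂ)
    (h1 : d + 2*a*b - a^2*c - c^2 = 0)
    (h2 : b^2 - a^2*d - c*d = 0)
    (p3 p4 : Polynomial ℂ)
    (hp3 : p3 = X^3 + C a * X^2 + C b)
    (hp4 : p4 = X^4 + C c * X^2 + C d) :
    p4^3 - p3^4 + C (4*a) * p3 * p4^2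
      - C (3*c - 2*a^2) * p3^2 * p4
      - C (-4*b + 2*a*c) * p3^3
      - C (3*d + 4*a*b + a^4 + a^2*c) * p4^2
      - C (4*a^2*b + 8*a*d - 2*a*c^2 - 6*b*c - 2*a^3*c) * p3 * p4
      - C (-3*d*c + 6*b^2 - 6*a*b*c + 2*a^2*d + a^2*c^2 + c^3) * p3^2
      - C (-3*d^2 - 2*a^2*b^2 - 2*a^2*d*c - 2*a^4*d + 3*b^2*c + 2*a*b*c^2
            - 8*a*b*d + 2*a^3*b*c) * p4
      - C (-4*b^3 - 4*a*d^2 + 6*b*d*c - 4*a^2*b*d + 6*a*b^2*c + 2*a*c^2*d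
            + 2*a^3*c*d - 2*a^2*b*c^2 - 2*b*c^3) * p3 = 0 := by
  subst hp3 hp4
  have hC1 := congrArg (C : ℂ → ℂ[X]) h1
  have hC2 := congrArg (C : ℂ → ℂ[X]) h2
  simp only [map_add, map_sub, map_neg, map_mul, map_pow, map_ofNat, map_zero] at hC1 hC2 ⊢
  exact curve34_eval_eq_zero (C a) (C b) (C c) (C d) X hC1 hC2
end
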